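/- arXiv:2305.03120 — 4 statements merged into one kernel-verified Lean document; each statement's English description precedes it below -/
import Mathlib

section
/- Let V be a monoidal category with very flat monoidal product admitting small products. Then for any two small families (A_i)_{i∈I} and (B_j)_{j∈J} of objects in V, the canonical morphism ι : (∏_{i∈I} A_i) ⊗ (∏_{j∈J} B_j) ⟶ ∏_{(i,j)∈I×J} (A_i ⊗ B_j), determined by π_{i,j} ∘ ι = π_i ⊗ π_j for all i ∈ I and j ∈ J (where π_i, π_j and π_{i,j} denote the canonical product projections), is a monomorphism. -/
open CategoryTheory Category MonoidalCategory Limits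

universe w v u

/-- A family of morphisms `(f i : X ⟶ Y i)` is jointly monic if any parallel pair
equalized by all members of the family is equal. -/
def JointlyMonic {V : Type u} [Category.{v} V] {ι : Type w} {X : V} {Y : ι → V}
    (f : ∀ i, X ⟶ Y i) : Prop :=
  ∀ ⦃W : V⦄ (g h : W ⟶ X), (∀ i, g ≫ f i = h ≫ f i) → g = h

/-- An object `A` is very flat if both endofunctors `- ⊗ A` and `A ⊗ -`
preserve jointly monic families. -/
def VeryFlat {V : Type u} [Category.{v} V] [MonoidalCategory V] (A : V) : Prop :=
  (∀ {ι : Type w} {B : V} {Bi : ι → V} (β : ∀ i, B ⟶ Bi i),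
    JointlyMonic β → JointlyMonic (fun i => β i ⊗ₘ 𝟙 A)) ∧
  (∀ {ι : Type w} {B : V} {Bi : ι → V} (β : ∀ i, B ⟶ Bi i),
    JointlyMonic β → JointlyMonic (fun i => 𝟙 A ⊗ₘ β i))

/-!
Write `π_i ⊗ π_j = (π_i ⊗ 𝟙) ≫ (𝟙 ⊗ π_j)`. Projections out of a product are jointly monic,
very flatness keeps both factor families jointly monic, and jointly monic families compose
along a double index. So the family `π_i ⊗ π_j` is jointly monic, which says exactly that
the morphism into the product it induces is a monomorphism.
-/

universe w₁ w₂

namespace JointlyMonic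

variable {V : Type u} [Category.{v} V]

theorem pi_π {ι : Type w} (Y : ι → V) [HasProduct Y] : JointlyMonic (Pi.π Y) :=
  fun _ g h hgh => Pi.hom_ext g h hgh

theorem comp_prod {I : Type w₁} {J : Type w₂} {X : V} {Y : I → V} {Z : I → J → V}
    {f : ∀ i, X ⟶ Y i} {g : ∀ i j, Y i ⟶ Z i j} (hf : JointlyMonic f)
    (hg : ∀ i, JointlyMonic (g i)) : JointlyMonic (fun p : I × J => f p.1 ≫ g p.1 p.2) :=
  fun _ a b hab => hf a b fun i => hg i _ _ fun j => by simpa using hab (i, j)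

theorem tensorHom [MonoidalCategory V] {I : Type w₁} {J : Type w₂} {X X' : V} {Y : I → V} {Y' : J → V}
    {f : ∀ i, X ⟶ Y i} {f' : ∀ j, X' ⟶ Y' j} (hX' : VeryFlat.{w₁} X')
    (hY : ∀ i, VeryFlat.{w₂} (Y i)) (hf : JointlyMonic f) (hf' : JointlyMonic f') :
    JointlyMonic (fun p : I × J => f p.1 ⊗ₘ f' p.2) := by
  have h := comp_prod (hX'.1 f hf) fun i => (hY i).2 f' hf'
  simpa only [tensorHom_comp_tensorHom, comp_id, id_comp] using h

theorem mono_pi_lift {ι : Type w} {X : V} {Y : ι → V} [HasProduct Y] {f : ∀ i, X ⟶ Y i}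
    (hf : JointlyMonic f) : Mono (Pi.lift f) :=
  ⟨fun g h hgh => hf g h fun i => by simpa using congrArg (· ≫ Pi.π Y i) hgh⟩

end JointlyMonic

/-- in a monoidal category with very flat monoidal product and small
products, for any two small families `(A i)` and `(B j)` the canonical morphism
`(∏ᶜ A) ⊗ (∏ᶜ B) ⟶ ∏ᶜ (A i ⊗ B j)` (determined by `π_{i,j} ∘ ι = π_i ⊗ π_j`)
is a monomorphism. -/
theorem mono_tensor_prodComparison
    {V : Type u} [Category.{v} V] [MonoidalCategory V] [HasProducts.{v} V]
    (hV : ∀ A : V, VeryFlat.{v} A)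
    {I J : Type v} (A : I → V) (B : J → V) :
    Mono (Pi.lift (fun p : I × J => Pi.π A p.1 ⊗ₘ Pi.π B p.2) :
      (∏ᶜ A) ⊗ (∏ᶜ B) ⟶ ∏ᶜ (fun p : I × J => A p.1 ⊗ B p.2)) :=
  JointlyMonic.mono_pi_lift <|
    .tensorHom (hV _) (fun _ => hV _) (.pi_π A) (.pi_π B)
end

section
/- Let V be a monoidal category with very flat monoidal product admitting countable products, W an object of V, and P = ∏_{k∈ℕ} W^{⊗k} with projections π_k : P ⟶ W^{⊗k}. Let c : C ⟶ P be a monomorphism and Δ : C ⟶ C ⊗ C a morphism such that for all k, l ∈ ℕ the composite (π_k ⊗ π_l) ∘ (c ⊗ c) ∘ Δ equals the composite of π_{k+l} ∘ c with the canonical coherence isomorphism W^{⊗(k+l)} ≅ W^{⊗k} ⊗ W^{⊗l}. Then Δ is coassociative and counital with counit ε = π_0 ∘ c : C ⟶ W^{⊗0} = 𝟙_V; that is, (C, Δ, π_0 ∘ c) is a comonoid in V. -/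
open CategoryTheory Category MonoidalCategory Limits Opposite

universe w v u

/-- A small category is `κ`-filtered if every diagram indexed by a category with fewer than
`κ` morphisms admits a cocone. -/
def IsCardinalFilteredCategory (J : Type v) [SmallCategory J] (κ : Cardinal.{v}) : Prop :=
  ∀ (K : Type v) [SmallCategory K],
    Cardinal.mk (Σ (a : K) (b : K), a ⟶ b) < κ →
      ∀ F : K ⥤ J, Nonempty (Limits.Cocone F)

/-- A category is locally presentable if it is cocomplete and there is a regular cardinal `κ`
and a (small) set `S` of objects whose representable functors preserve `κ`-filtered colimits,
such that every object is a `κ`-filtered colimit of objects of `S`. -/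
def IsLocallyPresentable (V : Type u) [Category.{v} V] : Prop :=
  HasColimitsOfSize.{v, v} V ∧
  ∃ (κ : Cardinal.{v}), κ.IsRegular ∧
    ∃ (ι : Type v) (S : ι → V),
      (∀ (i : ι) (J : Type v) [SmallCategory J], IsCardinalFilteredCategory J κ →
        Nonempty (PreservesColimitsOfShape J (coyoneda.obj (op (S i))))) ∧
      (∀ X : V, ∃ (J : Type v) (_ : SmallCategory J) (F : J ⥤ V) (cc : Limits.Cocone F),
        IsCardinalFilteredCategory J κ ∧ (∀ j, ∃ i, F.obj j = S i) ∧
        Nonempty (Limits.IsColimit cc) ∧ Nonempty (cc.pt ≅ X))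

variable {V : Type u} [Category.{v} V] [MonoidalCategory V]

/-- Tensor powers: `W^{⊗0} = 𝟙_V` and `W^{⊗(n+1)} = W^{⊗n} ⊗ W`. -/
def tpow (W : V) : ℕ → V
  | 0 => 𝟙_ V
  | n + 1 => tpow W n ⊗ W

/-- The canonical coherence isomorphism `W^{⊗(k+l)} ≅ W^{⊗k} ⊗ W^{⊗l}`. -/
def tpowAdd (W : V) : ∀ k l : ℕ, tpow W (k + l) ≅ tpow W k ⊗ tpow W l
  | _, 0 => (ρ_ _).symm
  | k, l + 1 => whiskerRightIso (tpowAdd W k l) W ≪≫ α_ _ _ _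

/-!
Write `f k := π_k ∘ c`. Since `c` is monic, the `f k` are jointly monic, and very flatness makes
the families `f k ⊗ f l` and `f k ⊗ (f l ⊗ f m)` jointly monic as well. So the comonoid equations
may be checked after composing with these families, where the hypothesis on `Δ` turns each side
into `f` followed by a coherence isomorphism between tensor powers of `W`; the two coherence
isomorphisms agree.
-/

lemma JointlyMonic.comp_pi_π {D : Type*} [Category D] {ι : Type w} {F : ι → D} [HasProduct F]
    {C : D} {c : C ⟶ ∏ᶜ F} [Mono c] : JointlyMonic (fun i => c ≫ Pi.π F i) := fun _ g h hgh =>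
  (cancel_mono c).1 (Pi.hom_ext _ _ fun i => by simpa only [assoc] using hgh i)

lemma JointlyMonic.tensorHom_s9 {ι κ : Type w} {X X' : V} {Y : ι → V} {Z : κ → V}
    {f : ∀ i, X ⟶ Y i} {g : ∀ j, X' ⟶ Z j} (hf : JointlyMonic f) (hg : JointlyMonic g)
    (hX' : VeryFlat.{w} X') (hY : ∀ i, VeryFlat.{w} (Y i)) :
    JointlyMonic (fun p : ι × κ => f p.1 ⊗ₘ g p.2) := fun _ a b hab =>
  hX'.1 f hf a b fun i => (hY i).2 g hg _ _ fun j => by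
    simpa only [assoc, tensorHom_comp_tensorHom, comp_id, id_comp] using hab (i, j)

lemma comp_eqToHom_eq {D : Type*} [Category D] {β : Type*} {F : β → D} {X : D}
    (f : ∀ b, X ⟶ F b) {a b : β} (h : a = b) : f a ≫ eqToHom (congrArg F h) = f b := by
  subst h; simp

section TensorPowers

variable (W : V)

lemma tpow_eqToHom_succ {a b : ℕ} (h : a = b) :
    eqToHom (congrArg (fun n => tpow W (n + 1)) h) = eqToHom (congrArg (tpow W) h) ▷ W := by
  subst h; simp; rfl

lemma tpowAdd_zero_left (l : ℕ) :
    (tpowAdd W 0 l).hom = eqToHom (congrArg (tpow W) (zero_add l)) ≫ (λ_ (tpow W l)).inv := by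
  induction l with
  | zero => exact unitors_inv_equal.symm.trans (id_comp _).symm
  | succ l ih =>
    change ((tpowAdd W 0 l).hom ▷ W) ≫ (α_ _ _ _).hom = _
    rw [ih, tpow_eqToHom_succ W (zero_add l)]
    simp only [tpow]
    monoidal

lemma tpowAdd_assoc (k l m : ℕ) :
    (tpowAdd W (k + l) m).hom ≫ (tpowAdd W k l).hom ▷ tpow W m ≫ (α_ _ _ _).hom =
      eqToHom (congrArg (tpow W) (add_assoc k l m)) ≫
        (tpowAdd W k (l + m)).hom ≫ tpow W k ◁ (tpowAdd W l m).hom := by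
  induction m with
  | zero =>
    change (ρ_ _).inv ≫ (tpowAdd W k l).hom ▷ 𝟙_ V ≫ (α_ _ _ _).hom =
      𝟙 _ ≫ (tpowAdd W k l).hom ≫ tpow W k ◁ (ρ_ (tpow W l)).inv
    monoidal
  | succ m ih =>
    change ((tpowAdd W (k + l) m).hom ▷ W ≫ (α_ _ _ _).hom) ≫ _ ≫ _ =
      _ ≫ ((tpowAdd W k (l + m)).hom ▷ W ≫ (α_ _ _ _).hom) ≫
        tpow W k ◁ ((tpowAdd W l m).hom ▷ W ≫ (α_ _ _ _).hom)
    rw [tpow_eqToHom_succ W (add_assoc k l m)]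
    simp only [tpow]
    calc ((tpowAdd W (k + l) m).hom ▷ W ≫ (α_ _ _ _).hom) ≫
          (tpowAdd W k l).hom ▷ (tpow W m ⊗ W) ≫ (α_ _ _ _).hom
        = ((tpowAdd W (k + l) m).hom ≫ (tpowAdd W k l).hom ▷ tpow W m ≫ (α_ _ _ _).hom) ▷ W ≫
            (α_ _ _ _).hom ≫ tpow W k ◁ (α_ _ _ _).hom := by monoidal
      _ = _ := by rw [ih]; monoidal

end TensorPowers

section MultiplicativeFamily

variable {W C : V} {Δ : C ⟶ C ⊗ C} {f : ∀ k, C ⟶ tpow W k}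

lemma comp_tensorHom_zero_left
    (hf : ∀ k l, Δ ≫ (f k ⊗ₘ f l) = f (k + l) ≫ (tpowAdd W k l).hom) (l : ℕ) :
    Δ ≫ (f 0 ⊗ₘ f l) = (λ_ C).inv ≫ 𝟙_ V ◁ f l := by
  rw [hf, tpowAdd_zero_left, ← leftUnitor_inv_naturality, ← comp_eqToHom_eq f (zero_add l),
    assoc]
  rfl

lemma comp_tensorHom_zero_right
    (hf : ∀ k l, Δ ≫ (f k ⊗ₘ f l) = f (k + l) ≫ (tpowAdd W k l).hom) (k : ℕ) :
    Δ ≫ (f k ⊗ₘ f 0) = (ρ_ C).inv ≫ f k ▷ 𝟙_ V :=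
  (hf k 0).trans (rightUnitor_inv_naturality (f k))

lemma comp_whiskerLeft_comp_tensorHom
    (hf : ∀ k l, Δ ≫ (f k ⊗ₘ f l) = f (k + l) ≫ (tpowAdd W k l).hom) (k l m : ℕ) :
    Δ ≫ C ◁ Δ ≫ (f k ⊗ₘ (f l ⊗ₘ f m)) =
      f (k + (l + m)) ≫ (tpowAdd W k (l + m)).hom ≫ tpow W k ◁ (tpowAdd W l m).hom := by
  rw [whiskerLeft_comp_tensorHom, hf l m, ← tensorHom_comp_whiskerLeft, reassoc_of% hf]

lemma comp_whiskerRight_comp_associator_comp_tensorHom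
    (hf : ∀ k l, Δ ≫ (f k ⊗ₘ f l) = f (k + l) ≫ (tpowAdd W k l).hom) (k l m : ℕ) :
    Δ ≫ Δ ▷ C ≫ (α_ C C C).hom ≫ (f k ⊗ₘ (f l ⊗ₘ f m)) =
      f (k + l + m) ≫ (tpowAdd W (k + l) m).hom ≫
        (tpowAdd W k l).hom ▷ tpow W m ≫ (α_ _ _ _).hom := by
  rw [← associator_naturality, whiskerRight_comp_tensorHom_assoc, hf k l,
    ← tensorHom_comp_whiskerRight_assoc, reassoc_of% hf]

end MultiplicativeFamily

/-- let `P = ∏_{k ∈ ℕ} W^{⊗k}` with projections `π_k`, let `c : C ⟶ P` be a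
monomorphism and `Δ : C ⟶ C ⊗ C` a morphism such that
`(π_k ⊗ π_l) ∘ (c ⊗ c) ∘ Δ = (coherence iso) ∘ π_{k+l} ∘ c` for all `k, l`.  Then `Δ` is
coassociative and counital with counit `ε = π_0 ∘ c`, i.e. `(C, Δ, π_0 ∘ c)` is a comonoid. -/
theorem comonoid_of_subobject_of_prod_tpow
    (hflat : ∀ A : V, VeryFlat.{0} A)
    (W : V) [HasProduct (fun k : ℕ => tpow W k)]
    {C : V} (c : C ⟶ ∏ᶜ (fun k : ℕ => tpow W k)) (hc : Mono c)
    (Δ : C ⟶ C ⊗ C)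
    (hΔ : ∀ k l : ℕ,
      Δ ≫ (c ⊗ₘ c) ≫ (Pi.π (fun k : ℕ => tpow W k) k ⊗ₘ Pi.π (fun k : ℕ => tpow W k) l) =
        c ≫ Pi.π (fun k : ℕ => tpow W k) (k + l) ≫ (tpowAdd W k l).hom)
    (ε : C ⟶ 𝟙_ V) (hε : ε = c ≫ Pi.π (fun k : ℕ => tpow W k) 0) :
    Δ ≫ (ε ▷ C) = (λ_ C).inv ∧
    Δ ≫ (C ◁ ε) = (ρ_ C).inv ∧
    Δ ≫ (C ◁ Δ) = Δ ≫ (Δ ▷ C) ≫ (α_ C C C).hom := by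
  let f : ∀ k, C ⟶ tpow W k := fun k => c ≫ Pi.π (fun k : ℕ => tpow W k) k
  have hf : ∀ k l, Δ ≫ (f k ⊗ₘ f l) = f (k + l) ≫ (tpowAdd W k l).hom := fun k l => by
    simpa only [f, assoc, tensorHom_comp_tensorHom] using hΔ k l
  have hf_mono : JointlyMonic f := JointlyMonic.comp_pi_π
  have hff_mono : JointlyMonic (fun p : ℕ × ℕ × ℕ => f p.1 ⊗ₘ (f p.2.1 ⊗ₘ f p.2.2)) :=
    hf_mono.tensorHom_s9 (hf_mono.tensorHom_s9 hf_mono (hflat C) fun _ => hflat _) (hflat _)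
      fun _ => hflat _
  refine ⟨?_, ?_, ?_⟩
  · refine (hflat (𝟙_ V)).2 f hf_mono _ _ fun l => ?_
    beta_reduce
    rw [id_tensorHom, assoc, ← MonoidalCategory.tensorHom_def, hε]
    exact comp_tensorHom_zero_left hf l
  · refine (hflat (𝟙_ V)).1 f hf_mono _ _ fun k => ?_
    beta_reduce
    rw [tensorHom_id, assoc, ← tensorHom_def', hε]
    exact comp_tensorHom_zero_right hf k
  · refine hff_mono _ _ fun ⟨k, l, m⟩ => ?_
    simp only [assoc]
    rw [comp_whiskerLeft_comp_tensorHom hf, comp_whiskerRight_comp_associator_comp_tensorHom hf,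
      tpowAdd_assoc, ← comp_eqToHom_eq f (add_assoc k l m), assoc]
end

section
/- Let V be a closed monoidal, locally presentable category with very flat monoidal product, J a small category, and F : J ⥤ Comon(V) a functor with limit L = lim F in the category of comonoids, with limit projections π_Z : L ⟶ F(Z) for Z in J. Then the family of morphisms (U(π_{Z_1}) ⊗ ⋯ ⊗ U(π_{Z_n})) ∘ Δ_L^n : U(L) ⟶ U(F(Z_1)) ⊗ ⋯ ⊗ U(F(Z_n)), indexed by n ∈ ℕ and tuples (Z_1, …, Z_n) of objects of J, is jointly monic in V (for n = 0 this morphism is the counit ε_L : U(L) ⟶ 𝟙_V). -/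
open CategoryTheory Category MonoidalCategory Limits Opposite

universe w v u

variable {V : Type u} [Category.{v} V] [MonoidalCategory V]

/-- The iterated comultiplication `Δ^0 = ε`, `Δ^{n+1} = (Δ^n ⊗ id) ∘ Δ` of a comonoid. -/
def iterComul (C : Comon V) : ∀ n, C.X ⟶ tpow C.X n
  | 0 => ComonObj.counit (X := C.X)
  | n + 1 => ComonObj.comul (X := C.X) ≫ (iterComul C n ▷ C.X)

variable {J : Type v} [SmallCategory J] (F : J ⥤ Comon V)

/-- The tensor product `U(F(Z_1)) ⊗ ⋯ ⊗ U(F(Z_n))` of the underlying objects of the values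
of `F` at a tuple of objects of `J` (with empty tensor product `𝟙_V`). -/
def tupleTensor : ∀ n : ℕ, (Fin n → J) → V
  | 0, _ => 𝟙_ V
  | n + 1, Z => tupleTensor n (fun i => Z i.castSucc) ⊗ (F.obj (Z (Fin.last n))).X

/-- The tensor product `U(π_{Z_1}) ⊗ ⋯ ⊗ U(π_{Z_n})` of the cone legs. -/
def tupleTensorProj (c : Limits.Cone F) :
    ∀ (n : ℕ) (Z : Fin n → J), tpow c.pt.X n ⟶ tupleTensor F n Z
  | 0, _ => 𝟙 _
  | n + 1, Z => tupleTensorProj c n (fun i => Z i.castSucc) ⊗ₘ (c.π.app (Z (Fin.last n))).hom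

/-!
The morphisms `φ_s = (π_{Z_1} ⊗ ⋯ ⊗ π_{Z_n}) ∘ Δⁿ` contain the counit (`n = 0`), the
projections up to `λ` (`n = 1`), and by coassociativity `Δ ∘ (φ_s ⊗ φ_t)` factors through
some `φ_u`. Iterating transfinitely the coequalizer of all pairs of maps out of the presentable
generators that are not separated by `φ`, and stopping at the regular cardinal `κ`, gives an
epimorphism `e : L ⟶ Q` with `φ = e ≫ f` for a jointly monic family `f`, along which every map
`w` with `w ∘ ρ_a` factoring through `φ` for a jointly monic `ρ` descends. Very flatness makes
`f ⊗ f` jointly monic, so the comultiplication descends to `Q`, and `Q` becomes a comonoid with a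
cone over `F`. The induced map `Q ⟶ L` is a retraction of `e`, hence `φ = e ≫ f` is jointly monic.
-/

open ComonObj

lemma CategoryTheory.ComonObj.comul_tensorHom_comul_tensorHom {C : Type*} [Category C]
    [MonoidalCategory C] (X : C) [ComonObj X] {A B D : C} (f : X ⟶ A) (g : X ⟶ B) (h : X ⟶ D) :
    Δ ≫ (f ⊗ₘ (Δ ≫ (g ⊗ₘ h))) = Δ ≫ ((Δ ≫ (f ⊗ₘ g)) ⊗ₘ h) ≫ (α_ A B D).hom := by
  have hl : f ⊗ₘ (Δ ≫ (g ⊗ₘ h)) = X ◁ Δ ≫ (f ⊗ₘ (g ⊗ₘ h)) := by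
    rw [← id_tensorHom, tensorHom_comp_tensorHom, id_comp]
  have hr : (Δ ≫ (f ⊗ₘ g)) ⊗ₘ h = Δ ▷ X ≫ ((f ⊗ₘ g) ⊗ₘ h) := by
    rw [← tensorHom_id, tensorHom_comp_tensorHom, id_comp]
  rw [hl, hr, comul_assoc_assoc, ← associator_naturality, assoc]

def tupleMap (c : Cone F) (s : Σ n : ℕ, Fin n → J) : c.pt.X ⟶ tupleTensor F s.1 s.2 :=
  iterComul c.pt s.1 ≫ tupleTensorProj F c s.1 s.2

section

variable {F}

lemma tupleMap_zero (c : Cone F) (Z : Fin 0 → J) : tupleMap F c ⟨0, Z⟩ = ε[c.pt.X] :=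
  comp_id _

lemma tupleMap_succ (c : Cone F) (n : ℕ) (Z : Fin (n + 1) → J) :
    tupleMap F c ⟨n + 1, Z⟩ =
      Δ ≫ (tupleMap F c ⟨n, fun i => Z i.castSucc⟩ ⊗ₘ (c.π.app (Z (Fin.last n))).hom) := by
  change (Δ ≫ iterComul c.pt n ▷ c.pt.X) ≫ (_ ⊗ₘ _) = _
  rw [assoc, ← tensorHom_id, tensorHom_comp_tensorHom, id_comp]
  rfl

lemma tupleMap_one_comp_leftUnitor_hom (c : Cone F) (Z : J) :
    tupleMap F c ⟨1, fun _ => Z⟩ ≫ (λ_ _).hom = (c.π.app Z).hom := by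
  rw [tupleMap_succ, tupleMap_zero]
  change (Δ ≫ (ε[c.pt.X] ⊗ₘ (c.π.app Z).hom)) ≫ (λ_ _).hom = _
  rw [MonoidalCategory.tensorHom_def, assoc, assoc, leftUnitor_naturality, counit_comul_assoc,
    Iso.inv_hom_id_assoc]

lemma exists_comul_tensorHom_tupleMap_π (c : Cone F) (s : Σ n : ℕ, Fin n → J) (Z : J) :
    ∃ t ξ, Δ ≫ (tupleMap F c s ⊗ₘ (c.π.app Z).hom) = tupleMap F c t ≫ ξ := by
  obtain ⟨n, Y⟩ := s
  have key : ∀ U : Fin (n + 1) → J, (fun i => U i.castSucc) = Y → U (Fin.last n) = Z →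
      ∃ t ξ, Δ ≫ (tupleMap F c ⟨n, Y⟩ ⊗ₘ (c.π.app Z).hom) = tupleMap F c t ≫ ξ := by
    rintro U rfl rfl
    exact ⟨⟨n + 1, U⟩, 𝟙 _, ((comp_id _).trans (tupleMap_succ c n U)).symm⟩
  exact key (Fin.snoc Y Z) (funext fun i => Fin.snoc_castSucc ..) (Fin.snoc_last ..)

lemma exists_comul_tensorHom_tupleMap (c : Cone F) (s t : Σ n : ℕ, Fin n → J) :
    ∃ u ξ, Δ ≫ (tupleMap F c s ⊗ₘ tupleMap F c t) = tupleMap F c u ≫ ξ := by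
  obtain ⟨n, Z⟩ := t
  induction n with
  | zero =>
    refine ⟨s, (ρ_ _).inv, ?_⟩
    rw [tupleMap_zero]
    change Δ ≫ (tupleMap F c s ⊗ₘ ε[c.pt.X]) = _
    rw [tensorHom_def', comul_counit_assoc]
    exact (rightUnitor_inv_naturality _).symm
  | succ n ih =>
    obtain ⟨u, ξ, hu⟩ := ih (fun i => Z i.castSucc)
    obtain ⟨t, ξ', ht⟩ := exists_comul_tensorHom_tupleMap_π c u (Z (Fin.last n))
    refine ⟨t, ξ' ≫ (ξ ⊗ₘ 𝟙 _) ≫ (α_ _ _ _).hom, ?_⟩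
    rw [tupleMap_succ]
    dsimp only [tupleTensor]
    rw [comul_tensorHom_comul_tensorHom, hu, ← comp_id (c.π.app _).hom,
      ← tensorHom_comp_tensorHom, assoc, reassoc_of% ht]

end

namespace CategoryTheory.Comon

variable {C : Type*} [Category C] [MonoidalCategory C] (M : Comon C) {Q : C} (e : M.X ⟶ Q) [Epi e]
  (ε' : Q ⟶ 𝟙_ C) (Δ' : Q ⟶ Q ⊗ Q) (hε : e ≫ ε' = ε[M.X]) (hΔ : e ≫ Δ' = Δ[M.X] ≫ (e ⊗ₘ e))

def ofEpi : Comon C where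
  X := Q
  comon :=
  { counit := ε'
    comul := Δ'
    counit_comul := by
      rw [← cancel_epi e, reassoc_of% hΔ, ← tensorHom_id, tensorHom_comp_tensorHom, hε, comp_id,
        MonoidalCategory.tensorHom_def, counit_comul_assoc, leftUnitor_inv_naturality]
    comul_counit := by
      rw [← cancel_epi e, reassoc_of% hΔ, ← id_tensorHom, tensorHom_comp_tensorHom, hε, comp_id,
        tensorHom_def', comul_counit_assoc, rightUnitor_inv_naturality]
    comul_assoc := by
      rw [← cancel_epi e, reassoc_of% hΔ, reassoc_of% hΔ, ← id_tensorHom, ← tensorHom_id,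
        tensorHom_comp_tensorHom, tensorHom_comp_tensorHom_assoc, comp_id, hΔ,
        comul_tensorHom_comul_tensorHom] }

def toOfEpi : M ⟶ ofEpi M e ε' Δ' hε hΔ := Hom.mk' (N := ofEpi M e ε' Δ' hε hΔ) e hε hΔ

instance : Epi (toOfEpi M e ε' Δ' hε hΔ) :=
  ⟨fun _ _ H => Comon.ext <| (cancel_epi e).1 <| congrArg Hom.hom H⟩

variable {M e ε' Δ' hε hΔ}

def ofEpiLift {N : Comon C} (f : M ⟶ N) (ψ : Q ⟶ N.X) (hψ : e ≫ ψ = f.hom) :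
    ofEpi M e ε' Δ' hε hΔ ⟶ N :=
  Hom.mk' (M := ofEpi M e ε' Δ' hε hΔ) ψ
    (by
      change ψ ≫ ε[N.X] = ε'
      rw [← cancel_epi e, reassoc_of% hψ, IsComonHom.hom_counit, hε])
    (by
      change ψ ≫ Δ[N.X] = Δ' ≫ (ψ ⊗ₘ ψ)
      rw [← cancel_epi e, reassoc_of% hψ, IsComonHom.hom_comul, reassoc_of% hΔ,
        tensorHom_comp_tensorHom, hψ])

lemma toOfEpi_comp_ofEpiLift {N : Comon C} (f : M ⟶ N) (ψ : Q ⟶ N.X) (hψ : e ≫ ψ = f.hom) :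
    toOfEpi M e ε' Δ' hε hΔ ≫ ofEpiLift f ψ hψ = f :=
  Comon.ext hψ

end CategoryTheory.Comon

lemma isSplitMono_of_isLimit {C : Type*} [Category C] [MonoidalCategory C] {K : Type*}
    [Category K] {G : K ⥤ Comon C} {c : Cone G} (hc : IsLimit c) {Q : C} (e : c.pt.X ⟶ Q)
    [Epi e] (ε' : Q ⟶ 𝟙_ C) (Δ' : Q ⟶ Q ⊗ Q) (hε : e ≫ ε' = ε[c.pt.X])
    (hΔ : e ≫ Δ' = Δ[c.pt.X] ≫ (e ⊗ₘ e)) (hπ : ∀ Z, ∃ ψ, e ≫ ψ = (c.π.app Z).hom) :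
    IsSplitMono e := by
  choose ψ hψ using hπ
  let cD : Cone G :=
    { pt := Comon.ofEpi c.pt e ε' Δ' hε hΔ
      π :=
      { app Z := Comon.ofEpiLift (c.π.app Z) (ψ Z) (hψ Z)
        naturality Z Z' u := by
          rw [← cancel_epi (Comon.toOfEpi c.pt e ε' Δ' hε hΔ)]
          simp only [Functor.const_obj_obj, Functor.const_obj_map, Category.id_comp]
          rw [Comon.toOfEpi_comp_ofEpiLift, reassoc_of% Comon.toOfEpi_comp_ofEpiLift]
          exact c.w u |>.symm } }
  have hs : Comon.toOfEpi c.pt e ε' Δ' hε hΔ ≫ hc.lift cD = 𝟙 c.pt := hc.hom_ext fun Z => by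
    rw [assoc, hc.fac, id_comp, Comon.toOfEpi_comp_ofEpiLift]
  exact ⟨⟨(hc.lift cD).hom, congrArg Comon.Hom.hom hs⟩⟩

namespace CategoryTheory.SmallObject.SuccStruct

lemma prop_iteration {C : Type*} [Category C] (Φ : SuccStruct C) (O : Type w) [LinearOrder O]
    [OrderBot O] [SuccOrder O] [WellFoundedLT O] [HasIterationOfShape O C] (P : C → Prop)
    (h₀ : P Φ.X₀) (hsucc : ∀ X, P X → P (Φ.succ X))
    (hcolim : ∀ (K : Type w) [LinearOrder K] [Nonempty K] (G : K ⥤ C) (c : Cocone G),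
      IsColimit c → (∀ k, P (G.obj k)) → P c.pt) :
    P (Φ.iteration O) := by
  have hobj (j : O) : P ((Φ.iterationFunctor O).obj j) := by
    induction j using SuccOrder.limitRecOn with
    | isMin j hj =>
      rw [hj.eq_bot]
      exact (Φ.iter (⊥ : O)).obj_bot ▸ h₀
    | succ j hj ih => exact (Φ.prop_iterationFunctor_map_succ j hj).succ_eq ▸ hsucc _ ih
    | isSuccLimit j hj ih =>
      have : Nonempty (Set.Iio j) := ⟨⟨⊥, hj.bot_lt⟩⟩
      exact hcolim _ _ _ ((Φ.iterationFunctor O).isColimitOfIsWellOrderContinuous j hj)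
        fun k => ih k.1 k.2
  exact hcolim O _ _ (colimit.isColimit _) hobj

end CategoryTheory.SmallObject.SuccStruct

namespace CategoryTheory.Under

variable {C : Type*} [Category C] {L : C} {K : Type*} [Category K] [IsConnected K]
  {G : K ⥤ Under L} {c : Cocone G} (hc : IsColimit c)
include hc

lemma epi_hom_of_isColimit (hG : ∀ k, Epi (G.obj k).hom) : Epi c.pt.hom where
  left_cancellation g h H := (isColimitOfPreserves (Under.forget L) hc).hom_ext fun k => by
    change (c.ι.app k).right ≫ g = (c.ι.app k).right ≫ h
    rw [← cancel_epi (G.obj k).hom, Under.w_assoc, Under.w_assoc]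
    exact H

lemma exists_hom_comp_eq_of_isColimit (hG : ∀ k, Epi (G.obj k).hom) {Y : C} (w : L ⟶ Y)
    (hw : ∀ k, ∃ w', (G.obj k).hom ≫ w' = w) : ∃ w', c.pt.hom ≫ w' = w := by
  choose w' hw' using hw
  let d : Cocone (G ⋙ Under.forget L) :=
    { pt := Y
      ι :=
      { app := w'
        naturality k k' u := by
          change (G.map u).right ≫ w' k' = w' k ≫ 𝟙 Y
          rw [comp_id, ← cancel_epi (G.obj k).hom, Under.w_assoc, hw', hw'] } }
  obtain ⟨k⟩ := IsConnected.is_nonempty (J := K)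
  let t : c.pt.right ⟶ Y := (isColimitOfPreserves (Under.forget L) hc).desc d
  have hk : (G.obj k).hom ≫ (c.ι.app k).right = c.pt.hom := Under.w (c.ι.app k)
  have hd : (c.ι.app k).right ≫ t = w' k := (isColimitOfPreserves (Under.forget L) hc).fac d k
  refine ⟨t, ?_⟩
  rw [← hk, assoc, hd, hw']

end CategoryTheory.Under

namespace Separation

open SmallObject

variable {C : Type*} [Category.{w} C] [HasColimitsOfSize.{w, w} C] {L : C} {Idx : Type w}
  {T : Idx → C} (φ : ∀ idx, L ⟶ T idx) {ι : Type w} (S : ι → C)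

abbrev UnseparatedPair (X : Under L) : Type w :=
  Σ i, { p : (S i ⟶ X.right) × (S i ⟶ X.right) // ∃ f : ∀ idx, X.right ⟶ T idx,
    (∀ idx, X.hom ≫ f idx = φ idx) ∧ ∀ idx, p.1 ≫ f idx = p.2 ≫ f idx }

noncomputable def quotientπ (X : Under L) : X.right ⟶
    coequalizer (Sigma.desc fun p : UnseparatedPair φ S X => p.2.1.1)
      (Sigma.desc fun p : UnseparatedPair φ S X => p.2.1.2) :=
  coequalizer.π _ _

instance (X : Under L) : Epi (quotientπ φ S X) :=
  inferInstanceAs (Epi (coequalizer.π _ _))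

noncomputable def succStruct : SuccStruct (Under L) where
  X₀ := Under.mk (𝟙 L)
  succ X := Under.mk (X.hom ≫ quotientπ φ S X)
  toSucc X := Under.homMk (quotientπ φ S X)

variable {φ S}

lemma UnseparatedPair.comp_toSucc_right {X : Under L} (p : UnseparatedPair φ S X) :
    p.2.1.1 ≫ ((succStruct φ S).toSucc X).right = p.2.1.2 ≫ ((succStruct φ S).toSucc X).right := by
  change p.2.1.1 ≫ quotientπ φ S X = p.2.1.2 ≫ quotientπ φ S X
  simpa [quotientπ] using Sigma.ι (fun p : UnseparatedPair φ S X => S p.1) p ≫=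
    coequalizer.condition (Sigma.desc fun p : UnseparatedPair φ S X => p.2.1.1)
      (Sigma.desc fun p : UnseparatedPair φ S X => p.2.1.2)

lemma epi_succ_hom {X : Under L} (hX : Epi X.hom) : Epi ((succStruct φ S).succ X).hom :=
  epi_comp X.hom (quotientπ φ S X)

lemma exists_succ_hom_comp_eq {X : Under L} [Epi X.hom] {Y : C} {w : L ⟶ Y} {A : Type w}
    {Ya : A → C} {ρ : ∀ a, Y ⟶ Ya a} (hρ : JointlyMonic ρ)
    (hw : ∀ a, ∃ idx, ∃ ξ : T idx ⟶ Ya a, w ≫ ρ a = φ idx ≫ ξ)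
    {w' : X.right ⟶ Y} (hw' : X.hom ≫ w' = w) :
    ∃ w'', ((succStruct φ S).succ X).hom ≫ w'' = w := by
  refine ⟨coequalizer.desc w' (Sigma.hom_ext _ _ fun p => ?_), ?_⟩
  · obtain ⟨f, hf, hp⟩ := p.2.2
    simp only [colimit.ι_desc_assoc, Cofan.mk_ι_app]
    refine hρ _ _ fun a => ?_
    obtain ⟨idx, ξ, h⟩ := hw a
    have hρa : w' ≫ ρ a = f idx ≫ ξ := by
      rw [← cancel_epi X.hom, reassoc_of% hw', h, reassoc_of% hf idx]
    rw [assoc, assoc, hρa, reassoc_of% hp idx]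
  · change (X.hom ≫ coequalizer.π _ _) ≫ _ = w
    rw [assoc, coequalizer.π_desc, hw']

variable (O : Type w) [LinearOrder O] [OrderBot O] [SuccOrder O] [WellFoundedLT O]

attribute [local instance] IsFiltered.isConnected

lemma epi_iteration_hom : Epi ((succStruct φ S).iteration O).hom :=
  (succStruct φ S).prop_iteration O (fun X => Epi X.hom) (inferInstanceAs (Epi (𝟙 L)))
    (fun _ => epi_succ_hom) fun _ _ _ _ _ hc => Under.epi_hom_of_isColimit hc

lemma exists_iteration_hom_comp_eq {Y : C} {w : L ⟶ Y} {A : Type w} {Ya : A → C}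
    {ρ : ∀ a, Y ⟶ Ya a} (hρ : JointlyMonic ρ)
    (hw : ∀ a, ∃ idx, ∃ ξ : T idx ⟶ Ya a, w ≫ ρ a = φ idx ≫ ξ) :
    ∃ w', ((succStruct φ S).iteration O).hom ≫ w' = w :=
  ((succStruct φ S).prop_iteration O (fun X => Epi X.hom ∧ ∃ w', X.hom ≫ w' = w)
    ⟨inferInstanceAs (Epi (𝟙 L)), w, id_comp w⟩
    (fun _ ⟨hX, _, hw'⟩ => ⟨epi_succ_hom hX, exists_succ_hom_comp_eq hρ hw hw'⟩)
    fun _ _ _ _ _ hc hG => ⟨Under.epi_hom_of_isColimit hc fun k => (hG k).1,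
      Under.exists_hom_comp_eq_of_isColimit hc (fun k => (hG k).1) w fun k => (hG k).2⟩).2

lemma jointlyMonic_of_iteration [NoMaxOrder O]
    (hS : ∀ {W Z : C} (g h : W ⟶ Z), (∀ i (x : S i ⟶ W), x ≫ g = x ≫ h) → g = h)
    (hpres : ∀ i, PreservesColimitsOfShape O (coyoneda.obj (op (S i))))
    {f : ∀ idx, ((succStruct φ S).iteration O).right ⟶ T idx}
    (hf : ∀ idx, ((succStruct φ S).iteration O).hom ≫ f idx = φ idx) : JointlyMonic f := by
  intro W g h hgh
  refine hS g h fun i x => ?_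
  let G := (succStruct φ S).iterationFunctor O
  -- `x ≫ g` and `x ≫ h` factor through a common stage `γ`; the factored pair is unseparated
  -- there, hence identified at stage `γ + 1`.
  obtain ⟨γ, u, v, hu, hv⟩ := Types.FilteredColimit.jointly_surjective_of_isColimit₂
    (isColimitOfPreserves (coyoneda.obj (op (S i)))
      (isColimitOfPreserves (Under.forget L) (colimit.isColimit G))) (x ≫ g) (x ≫ h)
  let ιγ : (G.obj γ).right ⟶ ((succStruct φ S).iteration O).right := (colimit.ι G γ).right
  suffices key : ∀ u v : S i ⟶ (G.obj γ).right, u ≫ ιγ = x ≫ g → v ≫ ιγ = x ≫ h →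
      x ≫ g = x ≫ h from key u v hu hv
  intro u v hu hv
  have hpair : u ≫ ((succStruct φ S).toSucc (G.obj γ)).right =
      v ≫ ((succStruct φ S).toSucc (G.obj γ)).right :=
    UnseparatedPair.comp_toSucc_right ⟨i, (u, v), fun idx => ιγ ≫ f idx,
      fun idx => (Under.w_assoc _ _).trans (hf idx),
      fun idx => by dsimp only; rw [reassoc_of% hu, reassoc_of% hv, hgh]⟩
  have hsucc : ((succStruct φ S).toSucc (G.obj γ) ≫
      ((succStruct φ S).iterationFunctorObjSuccIso γ (not_isMax γ)).inv ≫
        colimit.ι G (Order.succ γ)).right = ιγ := by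
    rw [← assoc, ← (succStruct φ S).iterationFunctor_map_succ γ (not_isMax γ), colimit.w]
  rw [← hu, ← hv, ← hsucc]
  have h := hpair =≫ (((succStruct φ S).iterationFunctorObjSuccIso γ (not_isMax γ)).inv ≫
    colimit.ι G (Order.succ γ)).right
  simp only [assoc, Under.comp_right] at h ⊢
  exact h

variable (φ S) in
theorem exists_factorization [NoMaxOrder O]
    (hS : ∀ {W Z : C} (g h : W ⟶ Z), (∀ i (x : S i ⟶ W), x ≫ g = x ≫ h) → g = h)
    (hpres : ∀ i, PreservesColimitsOfShape O (coyoneda.obj (op (S i)))) :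
    ∃ (Q : C) (e : L ⟶ Q) (f : ∀ idx, Q ⟶ T idx), Epi e ∧ (∀ idx, e ≫ f idx = φ idx) ∧
      JointlyMonic f ∧ ∀ {Y : C} (w : L ⟶ Y) {A : Type w} {Ya : A → C} {ρ : ∀ a, Y ⟶ Ya a},
        JointlyMonic ρ → (∀ a, ∃ idx, ∃ ξ : T idx ⟶ Ya a, w ≫ ρ a = φ idx ≫ ξ) →
          ∃ w', e ≫ w' = w := by
  choose f hf using fun idx => exists_iteration_hom_comp_eq (φ := φ) (S := S) O
    (ρ := fun _ : PUnit => 𝟙 (T idx)) (fun _ _ _ H => by simpa only [comp_id] using H ⟨⟩)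
    fun _ => ⟨idx, 𝟙 _, rfl⟩
  exact ⟨_, _, f, epi_iteration_hom O, hf, jointlyMonic_of_iteration O hS hpres hf,
    fun _ _ _ _ hρ hw => exists_iteration_hom_comp_eq O hρ hw⟩

end Separation

lemma JointlyMonic.mono_comp {C : Type*} [Category C] {ι : Type*} {X Q : C} {Y : ι → C}
    (e : X ⟶ Q) [Mono e] {f : ∀ i, Q ⟶ Y i} (hf : JointlyMonic f) :
    JointlyMonic fun i => e ≫ f i :=
  fun _ g h H => (cancel_mono e).1 (hf _ _ fun i => by simpa only [assoc] using H i)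

lemma JointlyMonic.tensorHom_s10 {C : Type*} [Category C] [MonoidalCategory C] {A : Type w}
    {Q : C} {Y : A → C} {f : ∀ a, Q ⟶ Y a} (hf : JointlyMonic f) (hQ : VeryFlat.{w} Q)
    (hY : ∀ a, VeryFlat.{w} (Y a)) : JointlyMonic fun p : A × A => f p.1 ⊗ₘ f p.2 :=
  fun _ g h H => hQ.1 f hf _ _ fun a => (hY a).2 f hf _ _ fun b => by
    simpa only [assoc, tensorHom_comp_tensorHom, id_comp, comp_id] using H (a, b)

lemma CategoryTheory.Limits.IsColimit.hom_ext_of_forall_obj_eq {C : Type*} [Category C]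
    {ι : Type*} {S : ι → C} {K : Type*} [Category K] {G : K ⥤ C} {c : Cocone G} (hc : IsColimit c)
    (hG : ∀ k, ∃ i, G.obj k = S i) {Z : C} {g h : c.pt ⟶ Z}
    (H : ∀ i (x : S i ⟶ c.pt), x ≫ g = x ≫ h) : g = h :=
  hc.hom_ext fun k => by
    obtain ⟨i, hi⟩ := hG k
    simpa only [assoc, cancel_epi] using H i (eqToHom hi.symm ≫ c.ι.app k)

lemma isCardinalFilteredCategory_of_isCardinalFiltered (J : Type v) [SmallCategory J]
    (κ : Cardinal.{v}) [Fact κ.IsRegular] [IsCardinalFiltered J κ] :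
    IsCardinalFilteredCategory J κ := fun K _ hK F =>
  IsCardinalFiltered.nonempty_cocone F <| (hasCardinalLT_iff_of_equiv (Arrow.equivSigma K) κ).2 <|
    (hasCardinalLT_iff_cardinal_mk_lt _ κ).2 hK

lemma IsLocallyPresentable.exists_separating {C : Type u} [Category.{v} C]
    (hC : _root_.IsLocallyPresentable C) :
    ∃ (κ : Cardinal.{v}) (_ : κ.IsRegular) (ι : Type v) (S : ι → C),
      (∀ {W Z : C} (g h : W ⟶ Z), (∀ i (x : S i ⟶ W), x ≫ g = x ≫ h) → g = h) ∧
      ∀ i, PreservesColimitsOfShape κ.ord.ToType (coyoneda.obj (op (S i))) := by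
  obtain ⟨-, κ, hκ, ι, S, hpres, hgen⟩ := hC
  have : Fact κ.IsRegular := ⟨hκ⟩
  refine ⟨κ, hκ, ι, S, fun g h H => ?_, fun i =>
    (hpres i _ (isCardinalFilteredCategory_of_isCardinalFiltered _ κ)).some⟩
  obtain ⟨K, _, G, c, -, hG, ⟨hc⟩, ⟨e⟩⟩ := hgen _
  rw [← cancel_epi e.hom]
  exact hc.hom_ext_of_forall_obj_eq hG fun i x => by simpa only [assoc] using H i (x ≫ e.hom)

theorem limit_comonoid_jointlyMonic
    (hV : _root_.IsLocallyPresentable V) (hflat : ∀ A : V, VeryFlat.{v} A)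
    (c : Limits.Cone F) (hc : Limits.IsLimit c) :
    JointlyMonic (fun s : Σ n : ℕ, Fin n → J =>
      iterComul c.pt s.1 ≫ tupleTensorProj F c s.1 s.2) := by
  have := hV.1
  obtain ⟨κ, hκ, ι, S, hS, hpres⟩ := hV.exists_separating
  have : Nonempty κ.ord.ToType := Cardinal.nonempty_ord_toType hκ.pos.ne'
  let : OrderBot κ.ord.ToType := WellFoundedLT.toOrderBot _
  have : NoMaxOrder κ.ord.ToType := Cardinal.noMaxOrder hκ.aleph0_le
  obtain ⟨Q, e, f, he, hf, hfm, hdesc⟩ :=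
    Separation.exists_factorization (tupleMap F c) S κ.ord.ToType hS hpres
  obtain ⟨Δ', hΔ'⟩ := hdesc (Δ ≫ (e ⊗ₘ e)) (hfm.tensorHom_s10 (hflat Q) fun _ => hflat _) fun p => by
    obtain ⟨u, ξ, h⟩ := exists_comul_tensorHom_tupleMap c p.1 p.2
    exact ⟨u, ξ, by rw [assoc, tensorHom_comp_tensorHom, hf, hf, h]⟩
  have : IsSplitMono e := isSplitMono_of_isLimit hc e (f ⟨0, Fin.elim0⟩) Δ'
    ((hf _).trans (tupleMap_zero c _)) hΔ' fun Z => ⟨f ⟨1, fun _ => Z⟩ ≫ (λ_ _).hom,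
      (assoc _ _ _).symm.trans (by rw [hf, tupleMap_one_comp_leftUnitor_hom])⟩
  have h := hfm.mono_comp e
  simp only [hf] at h
  exact h
end

section
/- Let V be a closed symmetric monoidal, locally presentable category with very flat monoidal product, with symmetry σ. For an object W of V, let (T^c(W), Δ, ε) be the cofree comonoid over W with couniversal morphism p : U(T^c(W)) ⟶ W. Then there exists an involutive isomorphism of comonoids T^c(W) ≅ T^c(W)^{cop}: explicitly, there is a morphism t : U(T^c(W)) ⟶ U(T^c(W)) in V satisfying t ∘ t = id, p ∘ t = p, ε ∘ t = ε, and Δ ∘ t = (t ⊗ t) ∘ σ ∘ Δ. -/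
open CategoryTheory Category MonoidalCategory Limits Opposite

universe w v u

/-!
Apply the couniversal property of `T` to the comonoid `T^{cop}` and the morphism `p`: this gives a
comonoid morphism `t : T^{cop} ⟶ T` over `W`, which is exactly the last three identities. Since
`σ` is a symmetry, `(T^{cop})^{cop} = T`, so `t` is also a comonoid morphism `T ⟶ T^{cop}`; hence
`t ∘ t` is a comonoid endomorphism of `T` over `W`, and uniqueness identifies it with the identity.
-/

namespace CategoryTheory.Comon

variable {V : Type u} [Category.{v} V] [MonoidalCategory V]

section Braided

variable [BraidedCategory V]

@[simps, reducible]
def cop (C : Comon V) : Comon V where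
  X := C.X
  comon :=
    { counit := C.comon.counit
      comul := C.comon.comul ≫ (β_ C.X C.X).hom
      counit_comul := by
        rw [assoc, ← BraidedCategory.braiding_naturality_right, ComonObj.comul_counit_assoc C.X]
        simp
      comul_counit := by
        rw [assoc, ← BraidedCategory.braiding_naturality_left, ComonObj.counit_comul_assoc C.X]
        simp
      comul_assoc := by
        simp only [comp_whiskerRight, MonoidalCategory.whiskerLeft_comp, assoc]
        rw [← BraidedCategory.braiding_naturality_left_assoc,
          ← BraidedCategory.braiding_naturality_right_assoc,
          ComonObj.comul_assoc_assoc C.X, BraidedCategory.braiding_tensor_left_hom,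
          BraidedCategory.braiding_tensor_right_hom]
        simp only [assoc, Iso.hom_inv_id_assoc]
        rw [← BraidedCategory.yang_baxter]
        simp }

@[simps]
def Hom.cop {C D : Comon V} (f : C ⟶ D) : C.cop ⟶ D.cop :=
  Hom.mk' f.hom (IsComonHom.hom_counit f.hom) (by
    simp only [cop_comon_comul, IsComonHom.hom_comul_assoc, assoc,
      BraidedCategory.braiding_naturality])

end Braided

@[simps!]
def copCopIso [SymmetricCategory V] (C : Comon V) : C.cop.cop ≅ C :=
  mkIso (Iso.refl C.X) (id_comp _) (by
    change _ = ((C.comon.comul ≫ (β_ C.X C.X).hom) ≫ (β_ C.X C.X).hom) ≫ _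
    simp)

end CategoryTheory.Comon

open Comon in
theorem cofree_comonoid_coop_iso_general
    {V : Type u} [Category.{v} V] [MonoidalCategory V] [SymmetricCategory V]
    (W : V) (T : Comon V) (p : T.X ⟶ W)
    (hT : ∀ (C : Comon V) (γ : C.X ⟶ W), ∃! u : C ⟶ T, u.hom ≫ p = γ) :
    ∃ t : T.X ⟶ T.X,
      t ≫ t = 𝟙 T.X ∧
      t ≫ p = p ∧
      t ≫ T.comon.counit = T.comon.counit ∧
      t ≫ T.comon.comul = T.comon.comul ≫ (β_ T.X T.X).hom ≫ (t ⊗ₘ t) := by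
  obtain ⟨t, ht, -⟩ := hT T.cop p
  have ht_sq : (copCopIso T).inv ≫ Hom.cop t ≫ t = 𝟙 T :=
    (hT T p).unique (by simp [ht]) (by simp)
  refine ⟨t.hom, by simpa using congrArg Hom.hom ht_sq, ht, IsComonHom.hom_counit t.hom, ?_⟩
  exact (IsComonHom.hom_comul t.hom).trans (assoc _ _ _)

/-- for `V` closed symmetric monoidal, locally presentable with very flat
monoidal product, and `T` the cofree comonoid over `W` with couniversal morphism `p`, there is
an involutive isomorphism of comonoids `T ≅ T^{cop}`: a morphism `t : T.X ⟶ T.X` with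
`t ∘ t = id`, `p ∘ t = p`, `ε ∘ t = ε` and `Δ ∘ t = (t ⊗ t) ∘ σ ∘ Δ`. -/
theorem cofree_comonoid_coop_iso
    {V : Type u} [Category.{v} V] [MonoidalCategory V] [SymmetricCategory V]
    [MonoidalClosed V]
    (hV : _root_.IsLocallyPresentable V) (hflat : ∀ A : V, VeryFlat.{v} A)
    (W : V) (T : Comon V) (p : T.X ⟶ W)
    (hT : ∀ (C : Comon V) (γ : C.X ⟶ W), ∃! u : C ⟶ T, u.hom ≫ p = γ) :
    ∃ t : T.X ⟶ T.X,
      t ≫ t = 𝟙 T.X ∧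
      t ≫ p = p ∧
      t ≫ T.comon.counit = T.comon.counit ∧
      t ≫ T.comon.comul = T.comon.comul ≫ (β_ T.X T.X).hom ≫ (t ⊗ₘ t) :=
  cofree_comonoid_coop_iso_general W T p hT
end
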